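/- arXiv:2304.04837 — 4 statements merged into one kernel-verified Lean document; each statement's English description precedes it below -/
import Mathlib

section
/- Let d ∈ ℕ, ε ∈ [0, ∞), and k ∈ ℕ. If 𝒫 is a (k, ε)-secluded partition of ℝ^d such that every member of 𝒫 has outer Lebesgue measure at most 1, then k ≥ (1 + 2ε)^d. -/
open MeasureTheory

/-!
Cover a large cube `Q` by the finitely many members `X` of the partition that meet it. Fattening
a set of measure at most `1` by the open ℓ∞ ball of radius `ε` multiplies its measure by at least
`(1 + 2ε)^d`; this is the Brunn–Minkowski inequality, which follows from the Prékopa–Leindler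
inequality, itself proved by induction on the dimension via Fubini. Hence the `ε`-fattenings of the pieces `X ∩ Q` have total
measure at least `(1 + 2ε)^d vol Q`. Every point lies within `ε` of at most `k` members, so this
total is at most `k` times the measure of the `ε`-fattening of `Q`. Letting the side of `Q` grow
gives `(1 + 2ε)^d ≤ k`.
-/

open Set Filter Metric
open scoped Pointwise ENNReal NNReal Topology

namespace Real

theorem volume_add_le_of_isCompact {K L : Set ℝ} (hK : IsCompact K) (hL : IsCompact L)
    (hK₀ : K.Nonempty) (hL₀ : L.Nonempty) : volume K + volume L ≤ volume (K + L) := by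
  obtain ⟨a, haK, ha⟩ := hK.exists_isLeast hK₀
  obtain ⟨b, hbL, hb⟩ := hL.exists_isGreatest hL₀
  have hinter : (b +ᵥ K) ∩ (a +ᵥ L) ⊆ {a + b} := by
    rintro _ ⟨⟨x, hx, rfl⟩, ⟨y, hy, hxy⟩⟩
    have := ha hx
    have := hb hy
    simp only [vadd_eq_add, mem_singleton_iff] at hxy ⊢
    linarith
  calc volume K + volume L = volume (b +ᵥ K) + volume (a +ᵥ L) := by
        rw [measure_vadd, measure_vadd]
    _ = volume ((b +ᵥ K) ∪ (a +ᵥ L)) := by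
        rw [← measure_union_add_inter _ (hL.measurableSet.const_vadd a),
          measure_mono_null hinter (measure_singleton _), add_zero]
    _ ≤ volume (K + L) := by
        refine measure_mono (union_subset ?_ ?_)
        · rintro _ ⟨x, hx, rfl⟩
          exact ⟨x, hx, b, hbL, add_comm _ _⟩
        · rintro _ ⟨y, hy, rfl⟩
          exact ⟨a, haK, y, hy, rfl⟩

theorem volume_add_le {S T : Set ℝ} (hS : MeasurableSet S) (hT : MeasurableSet T)
    (hS₀ : S.Nonempty) (hT₀ : T.Nonempty) : volume S + volume T ≤ volume (S + T) := by
  obtain ⟨a, ha⟩ := hS₀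
  obtain ⟨b, hb⟩ := hT₀
  rw [hS.measure_eq_iSup_isCompact, hT.measure_eq_iSup_isCompact]
  simp_rw [iSup_and']
  refine ENNReal.biSup_add_biSup_le' ⟨∅, empty_subset _, isCompact_empty⟩
    ⟨∅, empty_subset _, isCompact_empty⟩ fun K ⟨hKS, hK⟩ L ⟨hLT, hL⟩ => ?_
  calc volume K + volume L ≤ volume (insert a K) + volume (insert b L) := by
        gcongr <;> exact subset_insert _ _
    _ ≤ volume (insert a K + insert b L) :=
        volume_add_le_of_isCompact (hK.insert a) (hL.insert b) (insert_nonempty _ _)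
          (insert_nonempty _ _)
    _ ≤ volume (S + T) :=
        measure_mono (add_subset_add (insert_subset ha hKS) (insert_subset hb hLT))

theorem ofReal_mul_volume_add_le {a b : ℝ} (ha : 0 < a) (hb : 0 < b) {S T : Set ℝ}
    (hS : MeasurableSet S) (hT : MeasurableSet T) (hS₀ : S.Nonempty) (hT₀ : T.Nonempty) :
    ENNReal.ofReal a * volume S + ENNReal.ofReal b * volume T ≤ volume (a • S + b • T) := by
  simpa [Measure.addHaar_smul_of_nonneg volume ha.le, Measure.addHaar_smul_of_nonneg volume hb.le]
    using volume_add_le (hS.const_smul₀ a) (hT.const_smul₀ b) hS₀.smul_set hT₀.smul_set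

end Real

theorem volume_setOf_ofReal_le_inter_Ioi (a : ℝ≥0∞) :
    volume ({l : ℝ | ENNReal.ofReal l ≤ a} ∩ Ioi 0) = a := by
  rcases eq_or_ne a ⊤ with rfl | ha
  · simp
  · have : {l : ℝ | ENNReal.ofReal l ≤ a} ∩ Ioi 0 = Ioc 0 a.toReal := by
      ext l
      simp [ENNReal.ofReal_le_iff_le_toReal ha, and_comm]
    rw [this, Real.volume_Ioc, sub_zero, ENNReal.ofReal_toReal ha]

theorem lintegral_eq_lintegral_Ioi_measure_le {α : Type*} [MeasurableSpace α] (μ : Measure α)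
    [SFinite μ] {f : α → ℝ≥0∞} (hf : Measurable f) :
    ∫⁻ x, f x ∂μ = ∫⁻ l in Ioi 0, μ {x | ENNReal.ofReal l ≤ f x} := by
  have hE : MeasurableSet {p : ℝ × α | ENNReal.ofReal p.1 ≤ f p.2} :=
    measurableSet_le (ENNReal.measurable_ofReal.comp measurable_fst) (hf.comp measurable_snd)
  calc ∫⁻ x, f x ∂μ = ∫⁻ x, volume.restrict (Ioi 0) {l : ℝ | ENNReal.ofReal l ≤ f x} ∂μ := by
        refine lintegral_congr fun x => ?_
        rw [Measure.restrict_apply (measurableSet_le ENNReal.measurable_ofReal measurable_const),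
          volume_setOf_ofReal_le_inter_Ioi]
    _ = ∫⁻ l in Ioi 0, μ {x | ENNReal.ofReal l ≤ f x} :=
        (Measure.prod_apply_symm (μ := volume.restrict (Ioi 0)) (ν := μ) hE).symm.trans
          (Measure.prod_apply hE)

theorem measure_setOf_le_ne_zero_of_lt_essSup {α β : Type*} [MeasurableSpace α] {μ : Measure α}
    [CompleteLinearOrder β] {f : α → β} {c : β} (hc : c < essSup f μ) :
    μ {x | c ≤ f x} ≠ 0 := by
  refine fun h => (essSup_le_of_ae_le c ?_).not_gt hc
  filter_upwards [measure_eq_zero_iff_ae_notMem.mp h] with x hx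
  exact (not_le.mp hx).le

theorem measure_setOf_le_eq_zero_of_essSup_lt {α β : Type*} [MeasurableSpace α] {μ : Measure α}
    [CompleteLinearOrder β] {f : α → β} {c : β} (hc : essSup f μ < c) :
    μ {x | c ≤ f x} = 0 :=
  measure_eq_zero_iff_ae_notMem.mpr <| (ae_lt_of_essSup_lt hc).mono fun _ hx => not_le.mpr hx

theorem ofReal_mul_lintegral_add_le_of_min_le {t : ℝ} (ht₀ : 0 < t) (ht₁ : t < 1)
    {f g h : ℝ → ℝ≥0∞} (hf : Measurable f) (hg : Measurable g) (hh : Measurable h)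
    (hfg : essSup f volume = essSup g volume)
    (hfgh : ∀ x y, min (f x) (g y) ≤ h ((1 - t) * x + t * y)) :
    ENNReal.ofReal (1 - t) * (∫⁻ x, f x) + ENNReal.ofReal t * ∫⁻ x, g x ≤ ∫⁻ x, h x := by
  -- Compare superlevel sets: below the common essential supremum both are nonempty, so the
  -- one-dimensional Brunn–Minkowski inequality applies; above it both are null.
  have hlevel : ∀ l : ℝ, 0 < l → l ≠ (essSup f volume).toReal →
      ENNReal.ofReal (1 - t) * volume {x | ENNReal.ofReal l ≤ f x}
        + ENNReal.ofReal t * volume {x | ENNReal.ofReal l ≤ g x}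
        ≤ volume {x | ENNReal.ofReal l ≤ h x} := by
    intro l hl₀ hl
    have hl' : ENNReal.ofReal l ≠ essSup f volume := by
      intro h
      exact hl (by rw [← h, ENNReal.toReal_ofReal hl₀.le])
    rcases hl'.lt_or_gt with hlt | hgt
    · have hS := measure_setOf_le_ne_zero_of_lt_essSup hlt
      have hT := measure_setOf_le_ne_zero_of_lt_essSup (hfg ▸ hlt)
      refine (Real.ofReal_mul_volume_add_le (sub_pos.mpr ht₁) ht₀
        (measurableSet_le measurable_const hf) (measurableSet_le measurable_const hg)
        (nonempty_of_measure_ne_zero hS) (nonempty_of_measure_ne_zero hT)).trans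
        (measure_mono ?_)
      rintro _ ⟨_, ⟨x, hx, rfl⟩, _, ⟨y, hy, rfl⟩, rfl⟩
      exact (le_min hx hy).trans (hfgh x y)
    · rw [measure_setOf_le_eq_zero_of_essSup_lt hgt,
        measure_setOf_le_eq_zero_of_essSup_lt (hfg ▸ hgt)]
      simp
  rw [lintegral_eq_lintegral_Ioi_measure_le volume hf,
    lintegral_eq_lintegral_Ioi_measure_le volume hg,
    lintegral_eq_lintegral_Ioi_measure_le volume hh,
    ← lintegral_const_mul' _ _ ENNReal.ofReal_ne_top,
    ← lintegral_const_mul' _ _ ENNReal.ofReal_ne_top, ← lintegral_add_left]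
  · refine lintegral_mono_ae ?_
    filter_upwards [ae_restrict_mem measurableSet_Ioi,
      ae_restrict_of_ae (Measure.ae_ne volume _)] with l hl₀ hl
    exact hlevel l hl₀ hl
  · exact measurable_const.mul <| Antitone.measurable fun _ _ hl =>
      measure_mono fun _ hx => (ENNReal.ofReal_le_ofReal hl).trans hx

theorem ENNReal.geom_mean_le_arith_mean2_weighted {w₁ w₂ : ℝ} (hw₁ : 0 ≤ w₁) (hw₂ : 0 ≤ w₂)
    (hw : w₁ + w₂ = 1) (a b : ℝ≥0∞) :
    a ^ w₁ * b ^ w₂ ≤ ENNReal.ofReal w₁ * a + ENNReal.ofReal w₂ * b := by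
  lift w₁ to ℝ≥0 using hw₁
  lift w₂ to ℝ≥0 using hw₂
  have hw' : w₁ + w₂ = 1 := by exact_mod_cast hw
  simp only [ENNReal.ofReal_coe_nnreal]
  rcases eq_or_ne a ⊤ with rfl | ha
  · rcases eq_or_ne w₁ 0 with rfl | hw₁0
    · simp_all
    · simp [ENNReal.top_rpow_of_pos (NNReal.coe_pos.mpr (pos_iff_ne_zero.mpr hw₁0)), hw₁0]
  rcases eq_or_ne b ⊤ with rfl | hb
  · rcases eq_or_ne w₂ 0 with rfl | hw₂0
    · simp_all
    · simp [ENNReal.top_rpow_of_pos (NNReal.coe_pos.mpr (pos_iff_ne_zero.mpr hw₂0)), hw₂0]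
  lift a to ℝ≥0 using ha
  lift b to ℝ≥0 using hb
  rw [← ENNReal.coe_rpow_of_nonneg _ w₁.coe_nonneg, ← ENNReal.coe_rpow_of_nonneg _ w₂.coe_nonneg]
  exact_mod_cast NNReal.geom_mean_le_arith_mean2_weighted w₁ w₂ a b hw'

theorem ENNReal.min_le_rpow_mul_rpow {t : ℝ} (ht₀ : 0 ≤ t) (ht₁ : t ≤ 1) (a b : ℝ≥0∞) :
    min a b ≤ a ^ (1 - t) * b ^ t :=
  calc min a b = min a b ^ (1 - t) * min a b ^ t := by
        rw [← ENNReal.rpow_add_of_nonneg _ _ (sub_nonneg.mpr ht₁) ht₀, sub_add_cancel,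
          ENNReal.rpow_one]
    _ ≤ a ^ (1 - t) * b ^ t := by
        gcongr
        exacts [min_le_left a b, min_le_right a b]

theorem prekopa_leindler_real_of_essSup_ne_top {t : ℝ} (ht₀ : 0 < t) (ht₁ : t < 1)
    {F G H : ℝ → ℝ≥0∞} (hF : Measurable F) (hG : Measurable G) (hH : Measurable H)
    (hF_top : essSup F volume ≠ ⊤) (hG_top : essSup G volume ≠ ⊤)
    (hFGH : ∀ x y, F x ^ (1 - t) * G y ^ t ≤ H ((1 - t) * x + t * y)) :
    (∫⁻ x, F x) ^ (1 - t) * (∫⁻ x, G x) ^ t ≤ ∫⁻ x, H x := by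
  have ht₁' : 0 < 1 - t := sub_pos.mpr ht₁
  set α := essSup F volume
  set β := essSup G volume
  rcases eq_or_ne α 0 with hα | hα
  · rw [lintegral_congr_ae (ENNReal.essSup_eq_zero_iff.mp hα)]
    simp [ENNReal.zero_rpow_of_pos ht₁']
  rcases eq_or_ne β 0 with hβ | hβ
  · rw [lintegral_congr_ae (ENNReal.essSup_eq_zero_iff.mp hβ)]
    simp [ENNReal.zero_rpow_of_pos ht₀]
  -- Rescale `F` and `G` to essential supremum `1` so that the additive inequality applies.
  set c := α⁻¹ ^ (1 - t) * β⁻¹ ^ t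
  have hc₀ : c ≠ 0 := mul_ne_zero
    (ENNReal.rpow_pos (ENNReal.inv_pos.mpr hF_top) (ENNReal.inv_ne_top.mpr hα)).ne'
    (ENNReal.rpow_pos (ENNReal.inv_pos.mpr hG_top) (ENNReal.inv_ne_top.mpr hβ)).ne'
  have hc_top : c ≠ ⊤ := ENNReal.mul_ne_top
    (ENNReal.rpow_ne_top_of_nonneg ht₁'.le (ENNReal.inv_ne_top.mpr hα))
    (ENNReal.rpow_ne_top_of_nonneg ht₀.le (ENNReal.inv_ne_top.mpr hβ))
  have hscale : ∀ a b : ℝ≥0∞, (α⁻¹ * a) ^ (1 - t) * (β⁻¹ * b) ^ t = c * (a ^ (1 - t) * b ^ t) :=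
    fun a b => by
      rw [ENNReal.mul_rpow_of_nonneg _ _ ht₁'.le, ENNReal.mul_rpow_of_nonneg _ _ ht₀.le,
        mul_mul_mul_comm]
  have hnorm := ofReal_mul_lintegral_add_le_of_min_le ht₀ ht₁ (hF.const_mul α⁻¹)
    (hG.const_mul β⁻¹) (hH.const_mul c)
    (by rw [ENNReal.essSup_const_mul, ENNReal.essSup_const_mul, ENNReal.inv_mul_cancel hα hF_top,
      ENNReal.inv_mul_cancel hβ hG_top])
    (fun x y => (ENNReal.min_le_rpow_mul_rpow ht₀.le ht₁.le _ _).trans <| by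
      rw [hscale]; gcongr; exact hFGH x y)
  rw [lintegral_const_mul _ hF, lintegral_const_mul _ hG, lintegral_const_mul _ hH] at hnorm
  refine (ENNReal.mul_le_mul_iff_right hc₀ hc_top).mp ?_
  calc c * ((∫⁻ x, F x) ^ (1 - t) * (∫⁻ x, G x) ^ t)
      = (α⁻¹ * ∫⁻ x, F x) ^ (1 - t) * (β⁻¹ * ∫⁻ x, G x) ^ t := (hscale _ _).symm
    _ ≤ _ := ENNReal.geom_mean_le_arith_mean2_weighted ht₁'.le ht₀.le (sub_add_cancel 1 t) _ _
    _ ≤ c * ∫⁻ x, H x := hnorm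

theorem tendsto_lintegral_min_natCast {α : Type*} [MeasurableSpace α] {μ : Measure α}
    {f : α → ℝ≥0∞} (hf : Measurable f) :
    Tendsto (fun n : ℕ => ∫⁻ x, min (f x) n ∂μ) atTop (𝓝 (∫⁻ x, f x ∂μ)) :=
  lintegral_tendsto_of_tendsto_of_monotone (fun n => (hf.min measurable_const).aemeasurable)
    (ae_of_all _ fun _ _ _ hmn => min_le_min_left _ (Nat.cast_le.mpr hmn))
    (ae_of_all _ fun x => by
      simpa using (tendsto_const_nhds (x := f x)).min ENNReal.tendsto_nat_nhds_top)

theorem essSup_min_natCast_ne_top {α : Type*} [MeasurableSpace α] {μ : Measure α}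
    (f : α → ℝ≥0∞) (n : ℕ) : essSup (fun x => min (f x) n) μ ≠ ⊤ :=
  ne_top_of_le_ne_top (ENNReal.natCast_ne_top n)
    (essSup_le_of_ae_le _ (ae_of_all _ fun _ => min_le_right _ _))

theorem prekopa_leindler_real {t : ℝ} (ht₀ : 0 < t) (ht₁ : t < 1)
    {F G H : ℝ → ℝ≥0∞} (hF : Measurable F) (hG : Measurable G) (hH : Measurable H)
    (hFGH : ∀ x y, F x ^ (1 - t) * G y ^ t ≤ H ((1 - t) * x + t * y)) :
    (∫⁻ x, F x) ^ (1 - t) * (∫⁻ x, G x) ^ t ≤ ∫⁻ x, H x := by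
  have ht₁' : 0 < 1 - t := sub_pos.mpr ht₁
  rcases eq_or_ne (∫⁻ x, F x) 0 with hF₀ | hF₀
  · simp [hF₀, ENNReal.zero_rpow_of_pos ht₁']
  rcases eq_or_ne (∫⁻ x, G x) 0 with hG₀ | hG₀
  · simp [hG₀, ENNReal.zero_rpow_of_pos ht₀]
  have htrunc (n : ℕ) :
      (∫⁻ x, min (F x) n) ^ (1 - t) * (∫⁻ x, min (G x) n) ^ t ≤ ∫⁻ x, H x :=
    prekopa_leindler_real_of_essSup_ne_top ht₀ ht₁ (hF.min measurable_const)
      (hG.min measurable_const) hH (essSup_min_natCast_ne_top F n) (essSup_min_natCast_ne_top G n)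
      fun x y => le_trans (by gcongr <;> exact min_le_left _ _) (hFGH x y)
  refine le_of_tendsto' (x := atTop) ?_ htrunc
  refine ENNReal.Tendsto.mul ?_ (.inl ?_) ?_ (.inl ?_)
  · exact (ENNReal.continuous_rpow_const.tendsto _).comp (tendsto_lintegral_min_natCast hF)
  · exact (ENNReal.rpow_pos_of_nonneg (pos_iff_ne_zero.mpr hF₀) ht₁'.le).ne'
  · exact (ENNReal.continuous_rpow_const.tendsto _).comp (tendsto_lintegral_min_natCast hG)
  · exact (ENNReal.rpow_pos_of_nonneg (pos_iff_ne_zero.mpr hG₀) ht₀.le).ne'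

theorem measurable_fin_cons_uncurry {α : Type*} [MeasurableSpace α] {d : ℕ} :
    Measurable fun p : α × (Fin d → α) => (Fin.cons p.1 p.2 : Fin (d + 1) → α) :=
  measurable_pi_iff.mpr fun i =>
    Fin.cases measurable_fst (fun j => (measurable_pi_apply j).comp measurable_snd) i

theorem lintegral_eq_lintegral_lintegral_fin_cons {α : Type*} [MeasureSpace α]
    [SigmaFinite (volume : Measure α)] {d : ℕ} {F : (Fin (d + 1) → α) → ℝ≥0∞}
    (hF : Measurable F) : ∫⁻ x, F x = ∫⁻ s, ∫⁻ x, F (Fin.cons s x) := by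
  rw [← (volume_preserving_piFinSuccAbove (fun _ => α) 0).symm.lintegral_comp hF,
    Measure.volume_eq_prod]
  refine (lintegral_prod _ (hF.comp (MeasurableEquiv.measurable _)).aemeasurable).trans ?_
  simp only [Function.comp_apply, MeasurableEquiv.piFinSuccAbove_symm_apply,
    Fin.insertNthEquiv_zero]
  rfl

theorem prekopa_leindler {d : ℕ} {t : ℝ} (ht₀ : 0 < t) (ht₁ : t < 1)
    {F G H : (Fin d → ℝ) → ℝ≥0∞} (hF : Measurable F) (hG : Measurable G) (hH : Measurable H)
    (hFGH : ∀ x y, F x ^ (1 - t) * G y ^ t ≤ H ((1 - t) • x + t • y)) :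
    (∫⁻ x, F x) ^ (1 - t) * (∫⁻ x, G x) ^ t ≤ ∫⁻ x, H x := by
  induction d with
  | zero =>
    have hvol : (volume : Measure (Fin 0 → ℝ)) univ = 1 := by simp [volume_pi]
    simp only [lintegral_unique, hvol, mul_one]
    convert hFGH default default
  | succ d ih =>
    have hcons {K : (Fin (d + 1) → ℝ) → ℝ≥0∞} (hK : Measurable K) :
        Measurable fun p : ℝ × (Fin d → ℝ) => K (Fin.cons p.1 p.2) :=
      hK.comp measurable_fin_cons_uncurry
    rw [lintegral_eq_lintegral_lintegral_fin_cons hF, lintegral_eq_lintegral_lintegral_fin_cons hG,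
      lintegral_eq_lintegral_lintegral_fin_cons hH]
    refine prekopa_leindler_real ht₀ ht₁ (hcons hF).lintegral_prod_right'
      (hcons hG).lintegral_prod_right' (hcons hH).lintegral_prod_right' fun s r => ?_
    refine ih ((hcons hF).comp measurable_prodMk_left) ((hcons hG).comp measurable_prodMk_left)
      ((hcons hH).comp measurable_prodMk_left)
      fun x y => ?_
    convert hFGH (Fin.cons s x) (Fin.cons r y) using 2
    ext i
    refine Fin.cases ?_ (fun j => ?_) i <;> simp

theorem volume_rpow_mul_rpow_le_volume_smul_add_smul {d : ℕ} {t : ℝ} (ht₀ : 0 < t) (ht₁ : t < 1)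
    {A B : Set (Fin d → ℝ)} (hA : MeasurableSet A) (hB : MeasurableSet B) :
    volume A ^ (1 - t) * volume B ^ t ≤ volume ((1 - t) • A + t • B) := by
  set U := toMeasurable volume ((1 - t) • A + t • B)
  have hU : MeasurableSet U := measurableSet_toMeasurable _ _
  have hPL := prekopa_leindler ht₀ ht₁ (measurable_one.indicator hA)
    (measurable_one.indicator hB) (measurable_one.indicator hU) fun x y => ?_
  · rwa [lintegral_indicator_one hA, lintegral_indicator_one hB, lintegral_indicator_one hU,
      measure_toMeasurable] at hPL
  by_cases hx : x ∈ A
  · by_cases hy : y ∈ B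
    · have hxy : (1 - t) • x + t • y ∈ U :=
        subset_toMeasurable _ _ (add_mem_add (smul_mem_smul_set hx) (smul_mem_smul_set hy))
      simp [hx, hy, hxy]
    · simp [hy, ENNReal.zero_rpow_of_pos ht₀]
  · simp [hx, ENNReal.zero_rpow_of_pos (sub_pos.mpr ht₁)]

theorem ofReal_pow_mul_min_le_volume_thickening {d : ℕ} {ε : ℝ} (hε : 0 < ε)
    {A : Set (Fin d → ℝ)} (hA : MeasurableSet A) :
    ENNReal.ofReal ((1 + 2 * ε) ^ d) * min (volume A) 1 ≤ volume (thickening ε A) := by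
  -- Brunn–Minkowski for `(1 + 2ε) • A` and the ball of radius `(1 + 2ε) / 2`, with weight
  -- `t = 2ε / (1 + 2ε)`: the weighted sum is exactly `A + ball 0 ε`.
  set s := 1 + 2 * ε with hs_def
  have hs : 0 < s := by positivity
  set t := 2 * ε / s
  have ht₀ : 0 < t := by positivity
  have ht₁ : t < 1 := (div_lt_one hs).mpr (by linarith)
  have hts : t * s = 2 * ε := div_mul_cancel₀ _ hs.ne'
  have h1t : (1 - t) * s = 1 := by rw [sub_mul, one_mul, hts, hs_def]; ring
  have hsum : (1 - t) • (s • A) + t • ball (0 : Fin d → ℝ) (s / 2) = thickening ε A := by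
    rw [smul_smul, h1t, one_smul, _root_.smul_ball ht₀.ne', smul_zero, Real.norm_of_nonneg ht₀.le,
      add_ball_zero, mul_div_assoc', hts, mul_div_cancel_left₀ _ two_ne_zero]
  have hBM := volume_rpow_mul_rpow_le_volume_smul_add_smul ht₀ ht₁ (hA.const_smul₀ s)
    (measurableSet_ball (x := 0) (ε := s / 2))
  rw [hsum, Measure.addHaar_smul_of_nonneg _ hs.le, Module.finrank_fin_fun,
    Real.volume_pi_ball _ (by positivity), Fintype.card_fin, mul_div_cancel₀ _ two_ne_zero,
    ENNReal.mul_rpow_of_nonneg _ _ (sub_pos.mpr ht₁).le, mul_assoc, mul_comm (volume A ^ _),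
    ← mul_assoc, ← ENNReal.rpow_add_of_nonneg _ _ (sub_pos.mpr ht₁).le ht₀.le, sub_add_cancel,
    ENNReal.rpow_one] at hBM
  refine le_trans ?_ hBM
  gcongr
  simpa using ENNReal.min_le_rpow_mul_rpow ht₀.le ht₁.le (volume A) 1

theorem ofReal_pow_mul_le_volume_thickening {d : ℕ} {ε : ℝ} (hε : 0 < ε)
    {A : Set (Fin d → ℝ)} (hA : volume A ≤ 1) :
    ENNReal.ofReal ((1 + 2 * ε) ^ d) * volume A ≤ volume (thickening ε A) := by
  rw [← thickening_closure]
  calc ENNReal.ofReal ((1 + 2 * ε) ^ d) * volume A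
      ≤ ENNReal.ofReal ((1 + 2 * ε) ^ d) * min (volume (closure A)) 1 := by
        gcongr
        exact le_min (measure_mono subset_closure) hA
    _ ≤ _ := ofReal_pow_mul_min_le_volume_thickening hε isClosed_closure.measurableSet

theorem le_of_forall_mul_pow_le {a b c : ℝ} {d : ℕ} (h : ∀ n : ℕ, a * n ^ d ≤ b * (c + n) ^ d) :
    a ≤ b := by
  have hlim : Tendsto (fun n : ℕ => b * (1 + c / n) ^ d) atTop (𝓝 b) := by
    simpa using tendsto_const_nhds.mul
      (((tendsto_const_div_atTop_nhds_zero_nat c).const_add 1).pow d)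
  refine ge_of_tendsto hlim (eventually_atTop.mpr ⟨1, fun n hn => ?_⟩)
  have hn' : (0 : ℝ) < n := by exact_mod_cast hn
  rw [one_add_div hn'.ne', div_pow, ← mul_div_assoc, le_div_iff₀ (by positivity), add_comm]
  exact h n

open Classical in
theorem sum_measure_le_mul_measure_biUnion {α ι : Type*} [MeasurableSpace α] (μ : Measure α)
    {s : Finset ι} {W : ι → Set α} (hW : ∀ i ∈ s, MeasurableSet (W i)) {k : ℕ}
    (hk : ∀ x, {i ∈ s | x ∈ W i}.card ≤ k) :
    ∑ i ∈ s, μ (W i) ≤ k * μ (⋃ i ∈ s, W i) := by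
  have hU : MeasurableSet (⋃ i ∈ s, W i) := Finset.measurableSet_biUnion s hW
  calc ∑ i ∈ s, μ (W i) = ∫⁻ x, ∑ i ∈ s, (W i).indicator 1 x ∂μ := by
        rw [lintegral_finsetSum' _ fun i hi => (measurable_one.indicator (hW i hi)).aemeasurable]
        exact Finset.sum_congr rfl fun i hi => (lintegral_indicator_one (hW i hi)).symm
    _ ≤ ∫⁻ x, k * (⋃ i ∈ s, W i).indicator 1 x ∂μ := lintegral_mono fun x => ?_
    _ = k * μ (⋃ i ∈ s, W i) := by
        rw [lintegral_const_mul _ (measurable_one.indicator hU), lintegral_indicator_one hU]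
  by_cases hx : x ∈ ⋃ i ∈ s, W i
  · rw [indicator_of_mem hx, Pi.one_apply, mul_one]
    simpa [indicator_apply, Finset.sum_boole] using hk x
  · simp_all

def IsSecluded {E : Type*} [PseudoMetricSpace E] (P : Set (Set E)) (k : ℕ) (ε : ℝ) : Prop :=
  ∀ p : E, {X ∈ P | (X ∩ closedBall p ε).Nonempty}.encard ≤ k

namespace IsSecluded

variable {E : Type*} [PseudoMetricSpace E] {P : Set (Set E)} {k : ℕ} {ε : ℝ}

theorem one_le [Nonempty E] (hsec : IsSecluded P k ε) (hε : 0 ≤ ε) (hP : ⋃₀ P = univ) :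
    1 ≤ k := by
  obtain ⟨p⟩ := ‹Nonempty E›
  obtain ⟨X, hXP, hpX⟩ := mem_sUnion.mp (hP ▸ mem_univ p)
  have hX : {X ∈ P | (X ∩ closedBall p ε).Nonempty}.Nonempty :=
    ⟨X, hXP, p, hpX, mem_closedBall_self hε⟩
  exact_mod_cast (one_le_encard_iff_nonempty.mpr hX).trans (hsec p)

theorem finite_setOf_inter_nonempty (hsec : IsSecluded P k ε) (hε : 0 < ε) {K : Set E}
    (hK : IsCompact K) : {X ∈ P | (X ∩ K).Nonempty}.Finite := by
  obtain ⟨t, -, ht, hKt⟩ := hK.finite_cover_balls hε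
  refine (ht.biUnion fun p _ => finite_of_encard_le_coe (hsec p)).subset ?_
  rintro X ⟨hXP, x, hxX, hxK⟩
  obtain ⟨p, hp, hxp⟩ := mem_iUnion₂.mp (hKt hxK)
  exact mem_biUnion hp ⟨hXP, x, hxX, ball_subset_closedBall hxp⟩

open Classical in
theorem card_filter_le (hsec : IsSecluded P k ε) {F : Finset (Set E)} (hFP : ↑F ⊆ P) (p : E) :
    {X ∈ F | (X ∩ closedBall p ε).Nonempty}.card ≤ k := by
  have : (({X ∈ F | (X ∩ closedBall p ε).Nonempty} : Finset _) : Set (Set E)).encard ≤ k :=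
    (encard_le_encard fun X hX => by
      obtain ⟨hXF, hX⟩ := Finset.mem_filter.mp hX
      exact ⟨hFP hXF, hX⟩).trans (hsec p)
  rwa [encard_coe_eq_coe_finsetCard, Nat.cast_le] at this

theorem ofReal_pow_mul_volume_le {d : ℕ} {P : Set (Set (Fin d → ℝ))} (hsec : IsSecluded P k ε)
    (hε : 0 < ε) (hP : ⋃₀ P = univ) (hmeas : ∀ X ∈ P, volume X ≤ 1) {K : Set (Fin d → ℝ)}
    (hK : IsCompact K) :
    ENNReal.ofReal ((1 + 2 * ε) ^ d) * volume K ≤ k * volume (thickening ε K) := by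
  classical
  have hfin := hsec.finite_setOf_inter_nonempty hε hK
  set F := hfin.toFinset
  have hF {X} : X ∈ F ↔ X ∈ P ∧ (X ∩ K).Nonempty := hfin.mem_toFinset
  calc ENNReal.ofReal ((1 + 2 * ε) ^ d) * volume K
      ≤ ENNReal.ofReal ((1 + 2 * ε) ^ d) * ∑ X ∈ F, volume (X ∩ K) := by
        gcongr
        refine (measure_mono fun x hx => ?_).trans (measure_biUnion_finset_le F _)
        obtain ⟨X, hXP, hxX⟩ := mem_sUnion.mp (hP ▸ mem_univ x)
        exact mem_biUnion (hF.mpr ⟨hXP, x, hxX, hx⟩) ⟨hxX, hx⟩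
    _ = ∑ X ∈ F, ENNReal.ofReal ((1 + 2 * ε) ^ d) * volume (X ∩ K) := Finset.mul_sum _ _ _
    _ ≤ ∑ X ∈ F, volume (thickening ε (X ∩ K)) := Finset.sum_le_sum fun X hX =>
        ofReal_pow_mul_le_volume_thickening hε
          ((measure_mono inter_subset_left).trans (hmeas X (hF.mp hX).1))
    _ ≤ k * volume (⋃ X ∈ F, thickening ε (X ∩ K)) :=
        sum_measure_le_mul_measure_biUnion _ (fun _ _ => isOpen_thickening.measurableSet)
          fun q => (Finset.card_le_card (Finset.monotone_filter_right _ fun X _ hq => ?_)).trans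
            (hsec.card_filter_le (fun X hX => (hF.mp hX).1) q)
    _ ≤ k * volume (thickening ε K) := by
        gcongr
        exact iUnion₂_subset fun X _ => thickening_subset_of_subset ε inter_subset_right
  obtain ⟨x, hx, hqx⟩ := mem_thickening_iff.mp hq
  exact ⟨x, hx.1, mem_closedBall_comm.mp (le_of_lt hqx)⟩

theorem one_add_two_mul_pow_mul_le {d : ℕ} {P : Set (Set (Fin d → ℝ))}
    (hsec : IsSecluded P k ε) (hε : 0 < ε) (hP : ⋃₀ P = univ) (hmeas : ∀ X ∈ P, volume X ≤ 1)
    (n : ℕ) : (1 + 2 * ε) ^ d * n ^ d ≤ k * (2 * ε + n) ^ d := by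
  have h := hsec.ofReal_pow_mul_volume_le hε hP hmeas (isCompact_closedBall (0 : Fin d → ℝ) (n / 2))
  rw [thickening_closedBall hε (by positivity), Real.volume_pi_closedBall _ (by positivity),
    Real.volume_pi_ball _ (by positivity), Fintype.card_fin, mul_div_cancel₀ _ two_ne_zero,
    mul_add, mul_div_cancel₀ _ two_ne_zero, ← ENNReal.ofReal_natCast,
    ← ENNReal.ofReal_mul (by positivity), ← ENNReal.ofReal_mul (by positivity)] at h
  exact (ENNReal.ofReal_le_ofReal_iff (by positivity)).mp h

end IsSecluded

theorem secluded_degree_lower_bound_general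
    (d : ℕ) (ε : ℝ) (hε : 0 ≤ ε) (k : ℕ)
    (P : Set (Set (Fin d → ℝ))) (hP : Setoid.IsPartition P)
    (hmeas : ∀ X ∈ P, volume X ≤ 1)
    (hsec : ∀ p : Fin d → ℝ,
      {X ∈ P | (X ∩ Metric.closedBall p ε).Nonempty}.encard ≤ (k : ℕ∞)) :
    (1 + 2 * ε) ^ d ≤ (k : ℝ) := by
  have hsec' : IsSecluded P k ε := hsec
  rcases hε.eq_or_lt with rfl | hε
  · simpa using hsec'.one_le le_rfl hP.sUnion_eq_univ
  · exact le_of_forall_mul_pow_le (hsec'.one_add_two_mul_pow_mul_le hε hP.sUnion_eq_univ hmeas)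

/-- If `P` is a `(k, ε)`-secluded partition of `ℝ^d` (modeled as `Fin d → ℝ` with the ℓ∞ norm)
all of whose members have outer Lebesgue measure at most `1`, then `k ≥ (1 + 2ε)^d`. -/
theorem secluded_degree_lower_bound
    (d : ℕ) (hd : 0 < d) (ε : ℝ) (hε : 0 ≤ ε) (k : ℕ)
    (P : Set (Set (Fin d → ℝ))) (hP : Setoid.IsPartition P)
    (hmeas : ∀ X ∈ P, volume X ≤ 1)
    (hsec : ∀ p : Fin d → ℝ,
      {X ∈ P | (X ∩ Metric.closedBall p ε).Nonempty}.encard ≤ (k : ℕ∞)) :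
    (1 + 2 * ε) ^ d ≤ (k : ℝ) :=
  secluded_degree_lower_bound_general d ε hε k P hP hmeas hsec
end

section
/- Let d ∈ ℕ and let χ : [0,1]^d → C be a coloring of the unit cube by a set C of colors such that no color class contains points of opposite faces, i.e., for every color c ∈ C and every coordinate i ∈ {1,…,d}, the projection of χ^{-1}(c) onto the i-th coordinate does not contain both 0 and 1. Then for any ε ∈ (0, 1/2] there exists a point p ∈ [0,1]^d such that the open ℓ∞ ball of radius ε centered at p contains points of at least (1 + (2/3)ε)^d different colors. -/
/-!
Write `U c` for the open `ε`-neighbourhood of the colour class `c` and `s = 2ε/3`. If there are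
finitely many colours it suffices, by averaging over the cube, to show
`∑ c, vol (U c ∩ [0,1]^d) ≥ (1 + s)^d`; infinitely many colours are handled by compactness.
The volume bound is proved by induction on `d`, slicing along the first coordinate: the slices
of the colour classes at height `y` colour the `(d-1)`-cube, and the neighbourhood of the slice
at height `y` lies in the slice of `U c` at every height `h` with `|y - h| < ε`.

In the one-dimensional step, let `u` be the mass of the colours avoiding the face `x = 1` and
`v` that of the others, so `u 0 ≥ K`, `v 1 ≥ K` and `u + v ≥ K`. The integrals over `[0,1]` of
the suprema of `u` and `v` over `ε`-windows add up to at least `(1 + s) K`: the window sup of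
`u` is `≥ K` on `[0, s)`, that of `v` on `(1 - s, 1]`, and for `h ∈ [s, 1]` the windows around
`h` and `h - s` share the point `h - s/2`, where `u + v ≥ K`.
-/

open MeasureTheory Set Metric
open scoped ENNReal

namespace NeighborhoodSperner

noncomputable def windowSup (ε : ℝ) (u : ℝ → ℝ≥0∞) (h : ℝ) : ℝ≥0∞ :=
  ⨆ y ∈ ball h ε ∩ Icc 0 1, u y

variable {ε s : ℝ}

lemma le_windowSup {u : ℝ → ℝ≥0∞} {y h : ℝ} (hy : y ∈ Icc (0 : ℝ) 1)
    (hyh : dist y h < ε) : u y ≤ windowSup ε u h :=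
  le_iSup₂_of_le (f := fun y (_ : y ∈ ball h ε ∩ Icc 0 1) => u y) y ⟨hyh, hy⟩ le_rfl

lemma lowerSemicontinuous_windowSup (ε : ℝ) (u : ℝ → ℝ≥0∞) :
    LowerSemicontinuous (windowSup ε u) := by
  have : windowSup ε u =
      fun h => ⨆ y ∈ Icc (0 : ℝ) 1, (ball y ε).indicator (fun _ => u y) h := by
    ext h
    refine iSup_congr fun y => ?_
    by_cases hy : dist y h < ε <;> simp [hy, mem_ball, dist_comm h y]
  rw [this]
  exact lowerSemicontinuous_biSup fun y _ => isOpen_ball.lowerSemicontinuous_indicator zero_le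

lemma setLIntegral_comp_sub_Icc (g : ℝ → ℝ≥0∞) (a b s : ℝ) :
    ∫⁻ h in Icc (a + s) (b + s), g (h - s) = ∫⁻ h in Icc a b, g h := by
  rw [← preimage_sub_const_Icc]
  exact (measurePreserving_sub_right volume s).setLIntegral_comp_preimage_emb
    (measurableEmbedding_subRight s) g _

lemma setLIntegral_Icc_eq_Ico_add_Icc (f : ℝ → ℝ≥0∞) {a b c : ℝ} (hab : a ≤ b)
    (hbc : b ≤ c) :
    ∫⁻ h in Icc a c, f h = (∫⁻ h in Ico a b, f h) + ∫⁻ h in Icc b c, f h := by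
  rw [← lintegral_union measurableSet_Icc
    (disjoint_left.2 fun h h₁ h₂ => (not_le.2 h₁.2) h₂.1), Ico_union_Icc_eq_Icc hab hbc]

lemma setLIntegral_Icc_eq_Icc_add_Ioc (f : ℝ → ℝ≥0∞) {a b c : ℝ} (hab : a ≤ b)
    (hbc : b ≤ c) :
    ∫⁻ h in Icc a c, f h = (∫⁻ h in Icc a b, f h) + ∫⁻ h in Ioc b c, f h := by
  rw [← lintegral_union measurableSet_Ioc
    (disjoint_left.2 fun h h₁ h₂ => (not_lt.2 h₁.2) h₂.1), Icc_union_Ioc_eq_Icc hab hbc]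

theorem one_add_mul_le_setLIntegral_windowSup_add (hs : 0 < s) (hsε : s ≤ ε) (hs1 : s ≤ 1)
    {u v : ℝ → ℝ≥0∞} {K : ℝ≥0∞} (hK : ∀ y ∈ Icc (0 : ℝ) 1, K ≤ u y + v y)
    (hu : K ≤ u 0) (hv : K ≤ v 1) :
    (1 + ENNReal.ofReal s) * K ≤
      (∫⁻ h in Icc 0 1, windowSup ε u h) + ∫⁻ h in Icc 0 1, windowSup ε v h := by
  have hleft : ∀ h ∈ Ico 0 s, K ≤ windowSup ε u h := fun h hh =>
    hu.trans <| le_windowSup (by simp) <| by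
      rw [Real.dist_eq, abs_lt]; constructor <;> linarith [hh.1, hh.2]
  have hright : ∀ h ∈ Ioc (1 - s) 1, K ≤ windowSup ε v h := fun h hh =>
    hv.trans <| le_windowSup (by simp) <| by
      rw [Real.dist_eq, abs_lt]; constructor <;> linarith [hh.1, hh.2]
  have hmiddle : ∀ h ∈ Icc s 1, K ≤ windowSup ε u h + windowSup ε v (h - s) := by
    intro h hh
    have hy : h - s / 2 ∈ Icc (0 : ℝ) 1 := ⟨by linarith [hh.1], by linarith [hh.2]⟩
    refine (hK _ hy).trans (add_le_add (le_windowSup hy ?_) (le_windowSup hy ?_)) <;>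
      rw [Real.dist_eq, abs_lt] <;> constructor <;> linarith
  have hshift : ∫⁻ h in Icc s 1, windowSup ε v (h - s) =
      ∫⁻ h in Icc 0 (1 - s), windowSup ε v h := by
    simpa using setLIntegral_comp_sub_Icc (windowSup ε v) 0 (1 - s) s
  have hone : 1 + ENNReal.ofReal s =
      ENNReal.ofReal s + ENNReal.ofReal (1 - s) + ENNReal.ofReal s := by
    rw [← ENNReal.ofReal_add hs.le (by linarith), add_sub_cancel, ENNReal.ofReal_one, add_comm]
  calc (1 + ENNReal.ofReal s) * K
      = (∫⁻ _ in Ico 0 s, K) + (∫⁻ _ in Icc s 1, K) + ∫⁻ _ in Ioc (1 - s) 1, K := by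
        simp only [setLIntegral_const, Real.volume_Ico, Real.volume_Icc, Real.volume_Ioc,
          sub_zero, sub_sub_cancel]
        rw [hone]; ring
    _ ≤ (∫⁻ h in Ico 0 s, windowSup ε u h)
          + (∫⁻ h in Icc s 1, (windowSup ε u h + windowSup ε v (h - s)))
          + ∫⁻ h in Ioc (1 - s) 1, windowSup ε v h := by
        gcongr ?_ + ?_ + ?_
        exacts [setLIntegral_mono' measurableSet_Ico hleft,
          setLIntegral_mono' measurableSet_Icc hmiddle, setLIntegral_mono' measurableSet_Ioc hright]
    _ ≤ _ := by
        rw [setLIntegral_Icc_eq_Ico_add_Icc (windowSup ε u) hs.le hs1,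
          setLIntegral_Icc_eq_Icc_add_Ioc (windowSup ε v) (b := 1 - s) (by linarith) (by linarith),
          ← hshift, lintegral_add_left
          (lowerSemicontinuous_windowSup ε u).measurable]
        exact le_of_eq (by ring)

lemma windowSup_sum_le {C : Type*} {S : Finset C} {f g : C → ℝ → ℝ≥0∞} {h : ℝ}
    (hfg : ∀ c ∈ S, ∀ y ∈ Icc (0 : ℝ) 1, dist y h < ε → f c y ≤ g c h) :
    windowSup ε (fun y => ∑ c ∈ S, f c y) h ≤ ∑ c ∈ S, g c h :=
  iSup₂_le fun y ⟨hyh, hy⟩ => Finset.sum_le_sum fun c hc => hfg c hc y hy hyh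

theorem one_add_mul_le_setLIntegral_sum {C : Type*} {F : Finset C} {f g : C → ℝ → ℝ≥0∞}
    {K : ℝ≥0∞} (hs : 0 < s) (hsε : s ≤ ε) (hs1 : s ≤ 1)
    (hspread : ∀ c ∈ F, ∀ h ∈ Icc (0 : ℝ) 1, ∀ y ∈ Icc (0 : ℝ) 1,
      dist y h < ε → f c y ≤ g c h)
    (hcover : ∀ y ∈ Icc (0 : ℝ) 1, K ≤ ∑ c ∈ F, f c y)
    (hface : ∀ c ∈ F, f c 0 = 0 ∨ f c 1 = 0) :
    (1 + ENNReal.ofReal s) * K ≤ ∫⁻ h in Icc 0 1, ∑ c ∈ F, g c h := by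
  classical
  set L := F.filter (fun c => f c 1 = 0)
  set R := F.filter (fun c => f c 1 ≠ 0)
  have hsplit (φ : C → ℝ≥0∞) : ∑ c ∈ F, φ c = ∑ c ∈ L, φ c + ∑ c ∈ R, φ c :=
    (Finset.sum_filter_add_sum_filter_not F _ φ).symm
  have hL1 : ∑ c ∈ L, f c 1 = 0 := Finset.sum_eq_zero fun c hc => (Finset.mem_filter.1 hc).2
  have hR0 : ∑ c ∈ R, f c 0 = 0 := Finset.sum_eq_zero fun c hc =>
    (hface c (Finset.mem_filter.1 hc).1).resolve_right (Finset.mem_filter.1 hc).2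
  calc (1 + ENNReal.ofReal s) * K
      ≤ (∫⁻ h in Icc 0 1, windowSup ε (fun y => ∑ c ∈ L, f c y) h)
          + ∫⁻ h in Icc 0 1, windowSup ε (fun y => ∑ c ∈ R, f c y) h := by
        refine one_add_mul_le_setLIntegral_windowSup_add hs hsε hs1 (fun y hy => ?_) ?_ ?_
        · exact (hcover y hy).trans (hsplit _).le
        · simpa [hsplit, hR0] using hcover 0 (by simp)
        · simpa [hsplit, hL1] using hcover 1 (by simp)
    _ ≤ ∫⁻ h in Icc 0 1, (windowSup ε (fun y => ∑ c ∈ L, f c y) h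
          + windowSup ε (fun y => ∑ c ∈ R, f c y) h) := le_lintegral_add _ _
    _ ≤ ∫⁻ h in Icc 0 1, ∑ c ∈ F, g c h := by
        refine setLIntegral_mono' measurableSet_Icc fun h hh => ?_
        rw [hsplit]
        exact add_le_add (windowSup_sum_le fun c hc => hspread c (Finset.mem_filter.1 hc).1 h hh)
          (windowSup_sum_le fun c hc => hspread c (Finset.mem_filter.1 hc).1 h hh)

lemma setOf_cons_mem_eq_preimage {α : Type*} [MeasurableSpace α] {d : ℕ}
    (A : Set (Fin (d + 1) → α)) (h : α) :
    {y | Fin.cons h y ∈ A} =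
      Prod.mk h ⁻¹' ((MeasurableEquiv.piFinSuccAbove (fun _ => α) 0).symm ⁻¹' A) := by
  ext y
  simp [Fin.consEquiv]

lemma measurable_volume_setOf_cons_mem {α : Type*} [MeasureSpace α]
    [SigmaFinite (volume : Measure α)] {d : ℕ} {A : Set (Fin (d + 1) → α)}
    (hA : MeasurableSet A) :
    Measurable fun h => volume {y : Fin d → α | Fin.cons h y ∈ A} := by
  simp_rw [setOf_cons_mem_eq_preimage]
  exact measurable_measure_prodMk_left ((MeasurableEquiv.measurable _) hA)

lemma volume_eq_lintegral_volume_setOf_cons_mem {α : Type*} [MeasureSpace α]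
    [SigmaFinite (volume : Measure α)] {d : ℕ} {A : Set (Fin (d + 1) → α)}
    (hA : MeasurableSet A) :
    volume A = ∫⁻ h, volume {y : Fin d → α | Fin.cons h y ∈ A} := by
  simp_rw [setOf_cons_mem_eq_preimage]
  rw [← Measure.prod_apply ((MeasurableEquiv.measurable _) hA), ← Measure.volume_eq_prod,
    ((volume_preserving_piFinSuccAbove (fun _ => α) 0).symm _).measure_preimage
      hA.nullMeasurableSet]

lemma cons_mem_Icc_iff {d : ℕ} {h : ℝ} {y : Fin d → ℝ} :
    (Fin.cons h y : Fin (d + 1) → ℝ) ∈ Icc 0 1 ↔ h ∈ Icc 0 1 ∧ y ∈ Icc 0 1 := by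
  simp only [mem_Icc, Pi.le_def, Fin.forall_fin_succ, Fin.cons_zero, Fin.cons_succ,
    Pi.zero_apply, Pi.one_apply]
  tauto

lemma dist_cons_cons_lt_iff {d : ℕ} {ε h h' : ℝ} {y y' : Fin d → ℝ} (hε : 0 < ε) :
    dist (Fin.cons h y : Fin (d + 1) → ℝ) (Fin.cons h' y') < ε ↔
      dist h h' < ε ∧ dist y y' < ε := by
  simp only [dist_pi_lt_iff hε, Fin.forall_fin_succ, Fin.cons_zero, Fin.cons_succ]

lemma thickening_setOf_cons_mem_inter_Icc_subset {d : ℕ} {ε h y : ℝ} (hε : 0 < ε)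
    {T : Set (Fin (d + 1) → ℝ)} (hh : h ∈ Icc 0 1) (hyh : dist y h < ε) :
    thickening ε {z | Fin.cons y z ∈ T} ∩ Icc 0 1 ⊆
      {z : Fin d → ℝ | Fin.cons h z ∈ thickening ε T ∩ Icc 0 1} := by
  rintro z ⟨hz, hz01⟩
  obtain ⟨w, hw, hzw⟩ := mem_thickening_iff.1 hz
  refine ⟨mem_thickening_iff.2 ⟨_, hw, ?_⟩, cons_mem_Icc_iff.2 ⟨hh, hz01⟩⟩
  exact (dist_cons_cons_lt_iff hε).2 ⟨by rwa [dist_comm], hzw⟩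

lemma volume_thickening_inter_Icc_fin_zero {ε : ℝ} (hε : 0 < ε) {T : Set (Fin 0 → ℝ)}
    (hT : T.Nonempty) : volume (thickening ε T ∩ Icc 0 1) = 1 := by
  obtain ⟨x, hx⟩ := hT
  have hx' : x ∈ thickening ε T ∩ Icc 0 1 :=
    ⟨self_subset_thickening hε T hx, fun i => i.elim0, fun i => i.elim0⟩
  rw [Subsingleton.eq_univ_of_nonempty ⟨x, hx'⟩, volume_pi, Measure.pi_of_empty, measure_univ]

theorem one_add_pow_le_sum_volume_thickening_inter_Icc {C : Type*} {ε s : ℝ}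
    (hs : 0 < s) (hsε : s ≤ ε) (hs1 : s ≤ 1) :
    ∀ {d : ℕ} (F : Finset C) (T : C → Set (Fin d → ℝ)), Icc 0 1 ⊆ ⋃ c ∈ F, T c →
      (∀ c ∈ F, ∀ i, (∀ x ∈ T c, x i ≠ 0) ∨ ∀ x ∈ T c, x i ≠ 1) →
      (1 + ENNReal.ofReal s) ^ d ≤ ∑ c ∈ F, volume (thickening ε (T c) ∩ Icc 0 1)
  | 0, F, T, hcover, _ => by
    obtain ⟨c, hc, hxc⟩ := mem_iUnion₂.1 (hcover ⟨le_rfl, zero_le_one⟩)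
    rw [pow_zero, ← volume_thickening_inter_Icc_fin_zero (hs.trans_le hsε) ⟨_, hxc⟩]
    exact Finset.single_le_sum (f := fun c => volume (thickening ε (T c) ∩ Icc 0 1))
      (fun _ _ => zero_le) hc
  | d + 1, F, T, hcover, hface => by
    have hε : 0 < ε := hs.trans_le hsε
    set slice : ℝ → C → Set (Fin d → ℝ) := fun h c => {y | Fin.cons h y ∈ T c}
    have hslice_empty {c : C} {h : ℝ} (H : ∀ x ∈ T c, x 0 ≠ h) :
        volume (thickening ε (slice h c) ∩ Icc 0 1) = 0 := by
      have : slice h c = ∅ := eq_empty_of_forall_notMem fun y hy => H _ hy rfl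
      simp [this]
    have hmeas (c : C) : MeasurableSet (thickening ε (T c) ∩ Icc 0 1) :=
      isOpen_thickening.measurableSet.inter measurableSet_Icc
    calc (1 + ENNReal.ofReal s) ^ (d + 1)
        = (1 + ENNReal.ofReal s) * (1 + ENNReal.ofReal s) ^ d := pow_succ' _ _
      _ ≤ ∫⁻ h in Icc 0 1, ∑ c ∈ F,
            volume {y : Fin d → ℝ | Fin.cons h y ∈ thickening ε (T c) ∩ Icc 0 1} := by
        refine one_add_mul_le_setLIntegral_sum
          (f := fun c h => volume (thickening ε (slice h c) ∩ Icc 0 1)) hs hsε hs1 ?_ ?_ ?_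
        · exact fun c _ h hh y _ hyh =>
            measure_mono (thickening_setOf_cons_mem_inter_Icc_subset hε hh hyh)
        · intro h hh
          refine one_add_pow_le_sum_volume_thickening_inter_Icc hs hsε hs1 F (slice h)
            (fun y hy => ?_) fun c hc i => ?_
          · simpa [slice] using hcover (cons_mem_Icc_iff.2 ⟨hh, hy⟩)
          · exact (hface c hc i.succ).imp (fun H x hx => H _ hx) (fun H x hx => H _ hx)
        · exact fun c hc => (hface c hc 0).imp hslice_empty hslice_empty
      _ = ∑ c ∈ F, ∫⁻ h in Icc 0 1,
            volume {y : Fin d → ℝ | Fin.cons h y ∈ thickening ε (T c) ∩ Icc 0 1} :=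
        lintegral_finsetSum _ fun c _ => measurable_volume_setOf_cons_mem (hmeas c)
      _ ≤ ∑ c ∈ F, volume (thickening ε (T c) ∩ Icc 0 1) := Finset.sum_le_sum fun c _ => by
        rw [volume_eq_lintegral_volume_setOf_cons_mem (hmeas c)]
        exact setLIntegral_le_lintegral _ _

lemma exists_mem_sum_measure_inter_le_card {X C : Type*} [MeasurableSpace X] {μ : Measure X}
    {S : Set X} (hS : MeasurableSet S) (hμS : μ S = 1) (F : Finset C) {U : C → Set X}
    (hU : ∀ c, MeasurableSet (U c)) :
    ∃ p ∈ S, ∃ 𝒮 ⊆ F, ∑ c ∈ F, μ (U c ∩ S) ≤ 𝒮.card ∧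
      ∀ c ∈ 𝒮, p ∈ U c := by
  classical
  have hint :
      ∫⁻ p in S, ∑ c ∈ F, (U c).indicator 1 p ∂μ = ∑ c ∈ F, μ (U c ∩ S) := by
    rw [lintegral_finsetSum _ fun c _ => measurable_one.indicator (hU c)]
    exact Finset.sum_congr rfl fun c _ => by
      rw [lintegral_indicator_one (hU c), Measure.restrict_apply (hU c)]
  have hfin : ∑ c ∈ F, μ (U c ∩ S) ≠ ⊤ := ENNReal.sum_ne_top.2 fun c _ =>
    ne_top_of_le_ne_top (by simp [hμS]) (measure_mono inter_subset_right)
  obtain ⟨p, hp, hle⟩ :=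
    exists_setLAverage_le (by simp [hμS]) hS.nullMeasurableSet (hint ▸ hfin)
  rw [setLAverage_eq, hμS, div_one, hint] at hle
  refine ⟨p, hp, F.filter (p ∈ U ·), Finset.filter_subset _ _, ?_,
    fun c hc => (Finset.mem_filter.1 hc).2⟩
  simpa [indicator_apply] using hle

lemma exists_infinite_image_ball_inter {X Y : Type*} [PseudoMetricSpace X] {K : Set X}
    (hK : IsCompact K) {f : X → Y} (hf : (f '' K).Infinite) {ε : ℝ} (hε : 0 < ε) :
    ∃ p ∈ K, (f '' (ball p ε ∩ K)).Infinite := by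
  obtain ⟨t, htK, htfin, hcover⟩ := finite_cover_balls_of_compact hK hε
  by_contra! H
  refine hf ((htfin.biUnion fun p hp => H p (htK hp)).subset ?_)
  rintro _ ⟨x, hx, rfl⟩
  obtain ⟨p, hp, hxp⟩ := mem_iUnion₂.1 (hcover hx)
  exact mem_iUnion₂.2 ⟨p, hp, x, ⟨hxp, hx⟩, rfl⟩

end NeighborhoodSperner

open NeighborhoodSperner in
theorem neighborhood_sperner_general
    (d : ℕ) (C : Type*) (χ : (Fin d → ℝ) → C)
    (hface : ∀ (c : C) (i : Fin d),
      ¬((∃ x ∈ Set.Icc (0 : Fin d → ℝ) 1, χ x = c ∧ x i = 0) ∧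
        (∃ x ∈ Set.Icc (0 : Fin d → ℝ) 1, χ x = c ∧ x i = 1)))
    (ε : ℝ) (hε0 : 0 < ε) (hε1 : ε ≤ 1 / 2) :
    ∃ p ∈ Set.Icc (0 : Fin d → ℝ) 1, ∃ 𝒮 : Finset C,
      (1 + (2 / 3) * ε) ^ d ≤ (𝒮.card : ℝ) ∧
      ∀ c ∈ 𝒮, ∃ x ∈ Metric.ball p ε ∩ Set.Icc (0 : Fin d → ℝ) 1, χ x = c := by
  by_cases hfin : (χ '' Icc 0 1).Finite
  · obtain ⟨p, hp, 𝒮, -, hcard, h𝒮⟩ := exists_mem_sum_measure_inter_le_card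
      (μ := volume) (S := Icc (0 : Fin d → ℝ) 1) measurableSet_Icc
      (by simp [Real.volume_Icc_pi]) hfin.toFinset fun c => isOpen_thickening.measurableSet
    have hvol := one_add_pow_le_sum_volume_thickening_inter_Icc (ε := ε) (s := 2 / 3 * ε)
      (by positivity) (by linarith) (by linarith) hfin.toFinset (fun c => χ ⁻¹' {c} ∩ Icc 0 1)
      (fun x hx => mem_iUnion₂.2 ⟨χ x, hfin.mem_toFinset.2 ⟨x, hx, rfl⟩, rfl, hx⟩)
      fun c _ i => (not_and_or.1 (hface c i)).imp
        (fun h0 x ⟨hxc, hx⟩ hxi => h0 ⟨x, hx, hxc, hxi⟩)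
        (fun h1 x ⟨hxc, hx⟩ hxi => h1 ⟨x, hx, hxc, hxi⟩)
    refine ⟨p, hp, 𝒮, ?_, fun c hc => ?_⟩
    · rw [← ENNReal.ofReal_le_natCast, ENNReal.ofReal_pow (by positivity),
        ENNReal.ofReal_add zero_le_one (by positivity), ENNReal.ofReal_one]
      exact hvol.trans hcard
    · obtain ⟨x, ⟨hxc, hx⟩, hpx⟩ := mem_thickening_iff.1 (h𝒮 c hc)
      exact ⟨x, ⟨mem_ball'.2 hpx, hx⟩, hxc⟩
  · obtain ⟨p, hp, hinf⟩ := exists_infinite_image_ball_inter isCompact_Icc hfin hε0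
    obtain ⟨𝒮, h𝒮, hcard⟩ := hinf.exists_subset_card_eq ⌈(1 + (2 / 3) * ε) ^ d⌉₊
    exact ⟨p, hp, 𝒮, hcard ▸ Nat.le_ceil _, fun c hc => h𝒮 hc⟩

/-- Neighborhood Sperner/KKM/Lebesgue lemma: given a coloring `χ` of the unit cube `[0,1]^d`
(modeled inside `Fin d → ℝ` with the ℓ∞ norm) in which no color class contains points of
opposite faces, for any `ε ∈ (0, 1/2]` there is a point `p` of the cube whose open ℓ∞ ball of
radius `ε` contains points of at least `(1 + (2/3)ε)^d` different colors. -/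
theorem neighborhood_sperner
    (d : ℕ) (hd : 0 < d) (C : Type*) (χ : (Fin d → ℝ) → C)
    (hface : ∀ (c : C) (i : Fin d),
      ¬((∃ x ∈ Set.Icc (0 : Fin d → ℝ) 1, χ x = c ∧ x i = 0) ∧
        (∃ x ∈ Set.Icc (0 : Fin d → ℝ) 1, χ x = c ∧ x i = 1)))
    (ε : ℝ) (hε0 : 0 < ε) (hε1 : ε ≤ 1 / 2) :
    ∃ p ∈ Set.Icc (0 : Fin d → ℝ) 1, ∃ 𝒮 : Finset C,
      (1 + (2 / 3) * ε) ^ d ≤ (𝒮.card : ℝ) ∧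
      ∀ c ∈ 𝒮, ∃ x ∈ Metric.ball p ε ∩ Set.Icc (0 : Fin d → ℝ) 1, χ x = c :=
  neighborhood_sperner_general d C χ hface ε hε0 hε1
end

section
/- Let n ∈ ℕ, and for each i ∈ {1,…,n} let d_i, k_i ∈ ℕ, ε_i ∈ (0, ∞), and let 𝒫_i be a (k_i, ε_i)-secluded partition of ℝ^{d_i}. Then the product partition 𝒫 = {X_1 × ⋯ × X_n : X_i ∈ 𝒫_i for each i}, viewed as a partition of ℝ^d with d = d_1 + ⋯ + d_n, is a (k, ε)-secluded partition of ℝ^d where k = k_1 · k_2 ⋯ k_n and ε = min_{i∈{1,…,n}} ε_i. -/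
/-! In the sup metric, `q` lies within `ε = min εᵢ` of `p` only if each coordinate `qᵢ` lies
within `εᵢ` of `pᵢ`. Hence a box `Π Xᵢ` of the product partition meets the ball around `p` only
if every `Xᵢ` meets the `εᵢ`-ball around `pᵢ`, so these boxes are indexed by a product of sets of
sizes at most `kᵢ`. -/

namespace Setoid

variable {ι : Type*} {β : ι → Type*}

def piPartition (P : ∀ i, Set (Set (β i))) : Set (Set (∀ i, β i)) :=
  {S | ∃ X : ∀ i, Set (β i), (∀ i, X i ∈ P i) ∧ S = Set.univ.pi X}

theorem IsPartition.piPartition {P : ∀ i, Set (Set (β i))} (hP : ∀ i, IsPartition (P i)) :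
    IsPartition (piPartition P) := by
  constructor
  · rintro ⟨X, hX, hS⟩
    have hne : ∀ i, (X i).Nonempty := fun i ↦
      Set.nonempty_iff_ne_empty.2 fun h ↦ (hP i).1 (h ▸ hX i)
    exact (Set.univ_pi_nonempty_iff.2 hne).ne_empty hS.symm
  · intro a
    choose X hX hunique using fun i ↦ (hP i).2 (a i)
    refine ⟨Set.univ.pi X, ⟨⟨X, fun i ↦ (hX i).1, rfl⟩, fun i _ ↦ (hX i).2⟩, ?_⟩
    rintro S ⟨⟨Y, hY, rfl⟩, haS⟩
    exact congrArg Set.univ.pi <| funext fun i ↦ hunique i (Y i) ⟨hY i, haS i (Set.mem_univ i)⟩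

theorem piPartition_inter_closedBall_subset [Fintype ι] [∀ i, PseudoMetricSpace (β i)]
    (P : ∀ i, Set (Set (β i))) (p : ∀ i, β i) {ε : ℝ} {εf : ι → ℝ} (hε : ∀ i, ε ≤ εf i) :
    {S ∈ piPartition P | (S ∩ Metric.closedBall p ε).Nonempty} ⊆
      Set.univ.pi '' Set.univ.pi fun i ↦
        {X ∈ P i | (X ∩ Metric.closedBall (p i) (εf i)).Nonempty} := by
  rintro S ⟨⟨X, hX, rfl⟩, q, hqS, hqp⟩
  refine ⟨X, fun i _ ↦ ⟨hX i, q i, hqS i (Set.mem_univ i), ?_⟩, rfl⟩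
  exact (dist_le_pi_dist q p i).trans ((Metric.mem_closedBall.1 hqp).trans (hε i))

theorem encard_piPartition_inter_closedBall_le [Fintype ι] [∀ i, PseudoMetricSpace (β i)]
    {P : ∀ i, Set (Set (β i))} {k : ι → ℕ} {εf : ι → ℝ}
    (hsec : ∀ i, ∀ p : β i,
      {X ∈ P i | (X ∩ Metric.closedBall p (εf i)).Nonempty}.encard ≤ (k i : ℕ∞))
    (p : ∀ i, β i) {ε : ℝ} (hε : ∀ i, ε ≤ εf i) :
    {S ∈ piPartition P | (S ∩ Metric.closedBall p ε).Nonempty}.encard ≤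
      ((∏ i, k i : ℕ) : ℕ∞) :=
  calc _ ≤ (Set.univ.pi '' Set.univ.pi fun i ↦
          {X ∈ P i | (X ∩ Metric.closedBall (p i) (εf i)).Nonempty}).encard :=
        Set.encard_le_encard (piPartition_inter_closedBall_subset P p hε)
    _ ≤ (Set.univ.pi fun i ↦ {X ∈ P i | (X ∩ Metric.closedBall (p i) (εf i)).Nonempty}).encard :=
        Set.encard_image_le _ _
    _ ≤ ∏ i, (k i : ℕ∞) := by
        rw [Set.encard_pi_eq_prod_encard]
        exact Finset.prod_le_prod' fun i _ ↦ hsec i (p i)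
    _ = _ := (Nat.cast_prod _ _).symm

end Setoid

theorem product_partition_secluded_general
    (n : ℕ) (dim : Fin n → ℕ) (k : Fin n → ℕ)
    (εf : Fin n → ℝ)
    (P : (i : Fin n) → Set (Set (Fin (dim i) → ℝ)))
    (hpart : ∀ i, Setoid.IsPartition (P i))
    (hsec : ∀ i, ∀ p : Fin (dim i) → ℝ,
      {X ∈ P i | (X ∩ Metric.closedBall p (εf i)).Nonempty}.encard ≤ (k i : ℕ∞)) :
    Setoid.IsPartition
      {S : Set ((i : Fin n) → Fin (dim i) → ℝ) |
        ∃ X : (i : Fin n) → Set (Fin (dim i) → ℝ),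
          (∀ i, X i ∈ P i) ∧ S = Set.univ.pi X} ∧
    ∀ p : (i : Fin n) → Fin (dim i) → ℝ,
      {S ∈ {S : Set ((i : Fin n) → Fin (dim i) → ℝ) |
              ∃ X : (i : Fin n) → Set (Fin (dim i) → ℝ),
                (∀ i, X i ∈ P i) ∧ S = Set.univ.pi X} |
          (S ∩ Metric.closedBall p (⨅ i, εf i)).Nonempty}.encard
        ≤ ((∏ i, k i : ℕ) : ℕ∞) :=
  ⟨Setoid.IsPartition.piPartition hpart, fun p ↦
    Setoid.encard_piPartition_inter_closedBall_le hsec p fun i ↦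
      ciInf_le (Set.finite_range εf).bddBelow i⟩

/-- Product partition seclusion guarantees: if for each `i ∈ {1,…,n}` the partition `P i` of
`ℝ^(dim i)` is `(k i, εf i)`-secluded, then the product partition (of the ℓ∞-product space
`Π i, ℝ^(dim i)`, which is `ℝ^(Σ dim i)` with coordinates concatenated) is
`(Π k i, min εf i)`-secluded. -/
theorem product_partition_secluded
    (n : ℕ) (hn : 0 < n) (dim : Fin n → ℕ) (k : Fin n → ℕ)
    (εf : Fin n → ℝ) (hεf : ∀ i, 0 < εf i)
    (P : (i : Fin n) → Set (Set (Fin (dim i) → ℝ)))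
    (hpart : ∀ i, Setoid.IsPartition (P i))
    (hsec : ∀ i, ∀ p : Fin (dim i) → ℝ,
      {X ∈ P i | (X ∩ Metric.closedBall p (εf i)).Nonempty}.encard ≤ (k i : ℕ∞)) :
    Setoid.IsPartition
      {S : Set ((i : Fin n) → Fin (dim i) → ℝ) |
        ∃ X : (i : Fin n) → Set (Fin (dim i) → ℝ),
          (∀ i, X i ∈ P i) ∧ S = Set.univ.pi X} ∧
    ∀ p : (i : Fin n) → Fin (dim i) → ℝ,
      {S ∈ {S : Set ((i : Fin n) → Fin (dim i) → ℝ) |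
              ∃ X : (i : Fin n) → Set (Fin (dim i) → ℝ),
                (∀ i, X i ∈ P i) ∧ S = Set.univ.pi X} |
          (S ∩ Metric.closedBall p (⨅ i, εf i)).Nonempty}.encard
        ≤ ((∏ i, k i : ℕ) : ℕ∞) :=
  product_partition_secluded_general n dim k εf P hpart hsec
end

section
/- Let d ∈ ℕ, ε ∈ [0, ∞), and let 𝒫 be a unit cube partition of ℝ^d, i.e., a partition all of whose members are translates of [0,1)^d. Then 𝒫 is (k, ε)-secluded for k = ⌊(2 + 2ε)^d⌋; that is, for every p ∈ ℝ^d the closed ℓ∞ ball of radius ε centered at p intersects at most ⌊(2 + 2ε)^d⌋ members of 𝒫. -/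
/-! A cube `unitCube t` of the partition meeting `closedBall p ε` has its corner `t` in the box
`∏ i, (p i - ε - 1, p i + ε]` of side `1 + 2ε`. If two such corners have the same coordinatewise
ceilings relative to the box, they are less than `1` apart in every coordinate, so the two cubes
overlap and hence coincide. The cubes are therefore indexed by at most
`⌈1 + 2ε⌉₊ ^ d ≤ ⌊(2 + 2ε) ^ d⌋₊` integer points. -/

open Set Metric

section Floor

variable {R : Type*} [Ring R] [LinearOrder R] [IsStrictOrderedRing R] [FloorRing R]

theorem abs_sub_lt_one_of_ceil_eq_ceil {a b : R} (h : ⌈a⌉ = ⌈b⌉) : |a - b| < 1 := by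
  have hfloor : ⌊-a⌋ = ⌊-b⌋ := by rw [Int.floor_neg, Int.floor_neg, h]
  have := Int.abs_sub_lt_one_of_floor_eq_floor hfloor
  rwa [neg_sub_neg, abs_sub_comm] at this

theorem Nat.floor_pow_le_floor_pow {a : R} (ha : 0 ≤ a) (n : ℕ) : ⌊a⌋₊ ^ n ≤ ⌊a ^ n⌋₊ :=
  Nat.le_floor <| by
    push_cast
    exact pow_le_pow_left₀ (Nat.cast_nonneg _) (Nat.floor_le ha) n

theorem Nat.ceil_le_floor_add_one_of_nonneg {a : R} (ha : 0 ≤ a) : ⌈a⌉₊ ≤ ⌊a + 1⌋₊ :=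
  (Nat.floor_add_one ha).symm ▸ Nat.ceil_le_floor_add_one a

end Floor

theorem encard_le_ceil_pow_of_separated {ι : Type*} [Fintype ι] {C : Set (ι → ℝ)}
    {a b : ι → ℝ} {L : ℝ} (hbox : ∀ t ∈ C, ∀ i, t i ∈ Ioc (a i) (b i))
    (hL : ∀ i, b i - a i ≤ L) (hsep : ∀ t ∈ C, ∀ s ∈ C, (∀ i, |t i - s i| < 1) → t = s) :
    C.encard ≤ (⌈L⌉₊ ^ Fintype.card ι : ℕ) := by
  classical
  let f : (ι → ℝ) → (ι → ℤ) := fun t i => ⌈t i - a i⌉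
  have hinj : InjOn f C := fun t ht s hs hts => hsep t ht s hs fun i => by
    simpa using abs_sub_lt_one_of_ceil_eq_ceil (congrFun hts i)
  have hmaps : MapsTo f C (↑(Fintype.piFinset fun (_ : ι) => Finset.Icc 1 ⌈L⌉) : Set (ι → ℤ)) := by
    intro t ht
    rw [Finset.mem_coe, Fintype.mem_piFinset]
    intro i
    obtain ⟨hat, htb⟩ := hbox t ht i
    exact Finset.mem_Icc.2 ⟨Int.one_le_ceil_iff.2 (sub_pos.2 hat),
      Int.ceil_mono (show t i - a i ≤ L by linarith [hL i])⟩
  calc C.encard = (f '' C).encard := hinj.encard_image.symm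
    _ ≤ (↑(Fintype.piFinset fun (_ : ι) => Finset.Icc 1 ⌈L⌉) : Set (ι → ℤ)).encard :=
      encard_le_encard hmaps.image_subset
    _ = (⌈L⌉₊ ^ Fintype.card ι : ℕ) := by
      rw [encard_coe_eq_coe_finsetCard, Fintype.card_piFinset, Finset.prod_const,
        Finset.card_univ, Int.card_Icc, add_sub_cancel_right, Int.ceil_toNat]

section UnitCube

variable {ι : Type*}

def unitCube (t : ι → ℝ) : Set (ι → ℝ) :=
  univ.pi fun i => Ico (t i) (t i + 1)

theorem self_mem_unitCube (t : ι → ℝ) : t ∈ unitCube t :=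
  fun i _ => ⟨le_rfl, lt_add_one (t i)⟩

theorem unitCube_injective : Function.Injective (unitCube : (ι → ℝ) → Set (ι → ℝ)) := by
  intro t s h
  have hts : t ∈ unitCube s := h ▸ self_mem_unitCube t
  have hst : s ∈ unitCube t := h.symm ▸ self_mem_unitCube s
  exact le_antisymm (fun i => (hst i (mem_univ i)).1) (fun i => (hts i (mem_univ i)).1)

theorem unitCube_inter_nonempty {t s : ι → ℝ} (h : ∀ i, |t i - s i| < 1) :
    (unitCube t ∩ unitCube s).Nonempty := by
  refine ⟨t ⊔ s, fun i _ => ?_, fun i _ => ?_⟩ <;> have := abs_lt.1 (h i) <;>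
    exact ⟨by simp, max_lt (by linarith) (by linarith)⟩

theorem eq_of_unitCube_mem_partition {P : Set (Set (ι → ℝ))} (hP : Setoid.IsPartition P)
    {t s : ι → ℝ} (ht : unitCube t ∈ P) (hs : unitCube s ∈ P) (h : ∀ i, |t i - s i| < 1) :
    t = s :=
  unitCube_injective <| hP.pairwiseDisjoint.elim ht hs <|
    not_disjoint_iff_nonempty_inter.2 (unitCube_inter_nonempty h)

theorem mem_Ioc_of_unitCube_inter_closedBall_nonempty [Fintype ι] {t p : ι → ℝ} {ε : ℝ}
    (h : (unitCube t ∩ closedBall p ε).Nonempty) (i : ι) : t i ∈ Ioc (p i - ε - 1) (p i + ε) := by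
  obtain ⟨x, hxt, hxp⟩ := h
  have hx := hxt i (mem_univ i)
  have hdist := abs_le.1 <| (Real.dist_eq _ _).symm.trans_le <|
    (dist_le_pi_dist x p i).trans (mem_closedBall.1 hxp)
  constructor <;> linarith [hx.1, hx.2]

end UnitCube

theorem unit_cube_partition_trivially_secluded_general
    (d : ℕ) (ε : ℝ) (hε : 0 ≤ ε)
    (P : Set (Set (Fin d → ℝ))) (hP : Setoid.IsPartition P)
    (hcube : ∀ X ∈ P, ∃ t : Fin d → ℝ,
      X = Set.univ.pi fun i => Set.Ico (t i) (t i + 1)) :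
    ∀ p : Fin d → ℝ,
      {X ∈ P | (X ∩ Metric.closedBall p ε).Nonempty}.encard
        ≤ (⌊(2 + 2 * ε) ^ d⌋₊ : ℕ∞) := by
  intro p
  let C := {t | unitCube t ∈ P ∧ (unitCube t ∩ closedBall p ε).Nonempty}
  have hcover : {X ∈ P | (X ∩ closedBall p ε).Nonempty} ⊆ unitCube '' C := by
    rintro X ⟨hXP, hX⟩
    obtain ⟨t, rfl⟩ := hcube X hXP
    exact ⟨t, ⟨hXP, hX⟩, rfl⟩
  have hcount : C.encard ≤ (⌈1 + 2 * ε⌉₊ ^ d : ℕ) := by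
    simpa using encard_le_ceil_pow_of_separated
      (fun t ht => mem_Ioc_of_unitCube_inter_closedBall_nonempty ht.2)
      (fun _ => by linarith) (fun t ht s hs => eq_of_unitCube_mem_partition hP ht.1 hs.1)
  have hfloor : ⌈1 + 2 * ε⌉₊ ^ d ≤ ⌊(2 + 2 * ε) ^ d⌋₊ := by
    calc ⌈1 + 2 * ε⌉₊ ^ d ≤ ⌊2 + 2 * ε⌋₊ ^ d := by
          rw [show (2 : ℝ) + 2 * ε = 1 + 2 * ε + 1 by ring]
          gcongr
          exact Nat.ceil_le_floor_add_one_of_nonneg (by positivity)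
      _ ≤ ⌊(2 + 2 * ε) ^ d⌋₊ := Nat.floor_pow_le_floor_pow (by positivity) d
  calc _ ≤ (unitCube '' C).encard := encard_le_encard hcover
    _ ≤ C.encard := encard_image_le _ _
    _ ≤ _ := hcount
    _ ≤ _ := by exact_mod_cast hfloor

/-- Trivial seclusion bound for unit cube partitions: if `P` is a partition of `ℝ^d` (modeled
as `Fin d → ℝ` with the ℓ∞ norm) all of whose members are translates of `[0,1)^d`, then every
closed ℓ∞ ball of radius `ε` intersects at most `⌊(2 + 2ε)^d⌋` members of `P`. -/
theorem unit_cube_partition_trivially_secluded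
    (d : ℕ) (hd : 0 < d) (ε : ℝ) (hε : 0 ≤ ε)
    (P : Set (Set (Fin d → ℝ))) (hP : Setoid.IsPartition P)
    (hcube : ∀ X ∈ P, ∃ t : Fin d → ℝ,
      X = Set.univ.pi fun i => Set.Ico (t i) (t i + 1)) :
    ∀ p : Fin d → ℝ,
      {X ∈ P | (X ∩ Metric.closedBall p ε).Nonempty}.encard
        ≤ (⌊(2 + 2 * ε) ^ d⌋₊ : ℕ∞) :=
  unit_cube_partition_trivially_secluded_general d ε hε P hP hcube
end
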